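/- Let G be a connected simple graph such that m(T_G) = m(G − O(G)), where O(G) is the set of vertices lying on cycles of G and T_G is the graph obtained from G by contracting each cycle into a vertex. Then no vertex lying on a cycle of G is adjacent to a vertex of degree 1 of G. -/

import Mathlib

/-- `(G, H)` is a complex unit gain graph: `H` is Hermitian, entries of adjacent pairs
have modulus `1`, and entries of non-adjacent pairs (including the diagonal) vanish. -/
def IsUnitGain {V : Type*} (G : SimpleGraph V) (H : Matrix V V ℂ) : Prop :=
  H.IsHermitian ∧ (∀ i j, G.Adj i j → ‖H i j‖ = 1) ∧
    ∀ i j, ¬ G.Adj i j → H i j = 0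

/-- The matching number of a simple graph: the maximum size of a matching. -/
noncomputable def matchNum {V : Type*} (G : SimpleGraph V) : ℕ :=
  sSup {n : ℕ | ∃ M : G.Subgraph, M.IsMatching ∧ M.edgeSet.ncard = n}

/-- The cyclomatic number `c(G) = |E(G)| - |V| + ω(G)` of a simple graph. -/
noncomputable def cycNum {V : Type*} (G : SimpleGraph V) : ℤ :=
  (G.edgeSet.ncard : ℤ) - (Nat.card V : ℤ) + (Nat.card G.ConnectedComponent : ℤ)

/-- The gain of a walk: the product of the matrix entries along its darts. -/
noncomputable def gain {V : Type*} {G : SimpleGraph V} (H : Matrix V V ℂ) {u v : V}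
    (w : G.Walk u v) : ℂ :=
  (w.darts.map fun d => H d.toProd.1 d.toProd.2).prod

/-- The set of vertices of `G` lying on some cycle. -/
def cycVerts {V : Type*} (G : SimpleGraph V) : Set V :=
  {u | ∃ (x : V) (w : G.Walk x x), w.IsCycle ∧ u ∈ w.support}

/-- `u` and `v` lie on a common cycle of `G`. -/
def cycleRel {V : Type*} (G : SimpleGraph V) (u v : V) : Prop :=
  ∃ (x : V) (w : G.Walk x x), w.IsCycle ∧ u ∈ w.support ∧ v ∈ w.support

/-- The setoid generated by "lying on a common cycle". -/
def contractSetoid {V : Type*} (G : SimpleGraph V) : Setoid V :=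
  Relation.EqvGen.setoid (cycleRel G)

/-- `T_G`: the graph obtained from `G` by contracting each cycle into a single vertex. -/
def TG {V : Type*} (G : SimpleGraph V) : SimpleGraph (Quotient (contractSetoid G)) where
  Adj a b := a ≠ b ∧ ∃ u v : V, Quotient.mk (contractSetoid G) u = a ∧
      Quotient.mk (contractSetoid G) v = b ∧ G.Adj u v
  symm := ⟨fun a b ⟨hne, u, v, hu, hv, hadj⟩ => ⟨hne.symm, v, u, hv, hu, hadj.symm⟩⟩
  loopless := ⟨fun a ⟨hne, _⟩ => hne rfl⟩

/-- The rank of the principal submatrix of `H` indexed by a set `s` of vertices. -/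
noncomputable def rankOn {V : Type*} [Fintype V] (H : Matrix V V ℂ) (s : Set V) : ℕ :=
  letI : Fintype s := (Set.toFinite s).fintype
  (H.submatrix (Subtype.val : s → V) (Subtype.val : s → V)).rank

/-- The cycles of `G` are pairwise vertex-disjoint: any two cycles sharing a
vertex have the same edges. -/
def cyclesDisjoint {V : Type*} (G : SimpleGraph V) : Prop :=
  ∀ ⦃x y : V⦄ (c₁ : G.Walk x x) (c₂ : G.Walk y y), c₁.IsCycle → c₂.IsCycle →
    (∃ u, u ∈ c₁.support ∧ u ∈ c₂.support) → ∀ e, e ∈ c₁.edges ↔ e ∈ c₂.edges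

/-- `b(G)`: the minimum cardinality of a set `S` of vertices such that `G - S` is
bipartite (i.e. `2`-colorable). -/
noncomputable def bipNum {V : Type*} (G : SimpleGraph V) : ℕ :=
  sInf {n : ℕ | ∃ S : Set V, S.ncard = n ∧ (G.induce Sᶜ).Colorable 2}

/-!
A pendant vertex `w` adjacent to a cycle vertex `u` lies on no cycle, and it is isolated in
`G - O(G)` because its only neighbour is `u`. Contracting cycles is injective on `G - O(G)`, so
a maximum matching of `G - O(G)` is carried to a matching of `T_G` that misses both `[u]` and
`[w]`; adding the edge `[u][w]` shows `m(G - O(G)) < m(T_G)`.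
-/

open SimpleGraph Function

section Matching

variable {V W : Type*} {G : SimpleGraph V} {G' : SimpleGraph W}

lemma matchNum_bddAbove [Finite V] :
    BddAbove {n : ℕ | ∃ M : G.Subgraph, M.IsMatching ∧ M.edgeSet.ncard = n} := by
  refine ⟨Nat.card (Sym2 V), ?_⟩
  rintro _ ⟨M, -, rfl⟩
  simpa only [Set.ncard_univ] using Set.ncard_le_ncard (Set.subset_univ M.edgeSet)

lemma SimpleGraph.Subgraph.IsMatching.ncard_edgeSet_le_matchNum [Finite V] {M : G.Subgraph}
    (hM : M.IsMatching) : M.edgeSet.ncard ≤ matchNum G :=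
  le_csSup matchNum_bddAbove ⟨M, hM, rfl⟩

lemma exists_isMatching_ncard_edgeSet_eq_matchNum [Finite V] :
    ∃ M : G.Subgraph, M.IsMatching ∧ M.edgeSet.ncard = matchNum G :=
  have hbot : (0 : ℕ) ∈ {n : ℕ | ∃ M : G.Subgraph, M.IsMatching ∧ M.edgeSet.ncard = n} :=
    ⟨⊥, fun _ hv ↦ hv.elim, by simp⟩
  Nat.sSup_mem ⟨0, hbot⟩ matchNum_bddAbove

lemma SimpleGraph.Subgraph.IsMatching.ncard_edgeSet_lt_matchNum [Finite V] {M : G.Subgraph}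
    (hM : M.IsMatching) {a b : V} (hab : G.Adj a b) (ha : a ∉ M.verts) (hb : b ∉ M.verts) :
    M.edgeSet.ncard < matchNum G := by
  have hdisj : Disjoint M.support (G.subgraphOfAdj hab).support := by
    rw [support_subgraphOfAdj, Set.disjoint_insert_right, Set.disjoint_singleton_right]
    exact ⟨fun h ↦ ha (M.support_subset_verts h), fun h ↦ hb (M.support_subset_verts h)⟩
  have hnew : s(a, b) ∉ M.edgeSet := fun h ↦ ha (M.edge_vert h)
  calc M.edgeSet.ncard < (insert s(a, b) M.edgeSet).ncard := by
        rw [Set.ncard_insert_of_notMem hnew]; omega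
    _ = (M ⊔ G.subgraphOfAdj hab).edgeSet.ncard := by
        rw [Subgraph.edgeSet_sup, edgeSet_subgraphOfAdj, Set.union_singleton]
    _ ≤ matchNum G := (hM.sup (.subgraphOfAdj hab) hdisj).ncard_edgeSet_le_matchNum

lemma matchNum_lt_of_injective [Finite V] [Finite W] (f : G →g G') (hf : Injective f)
    {a b : W} (hab : G'.Adj a b) (ha : ∀ x y, G.Adj x y → f x ≠ a)
    (hb : ∀ x y, G.Adj x y → f x ≠ b) : matchNum G < matchNum G' := by
  obtain ⟨M, hM, hcard⟩ := exists_isMatching_ncard_edgeSet_eq_matchNum (G := G)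
  have hmiss : ∀ c, (∀ x y, G.Adj x y → f x ≠ c) → c ∉ (M.map f).verts := by
    rintro c hc ⟨x, hx, rfl⟩
    obtain ⟨y, hxy, -⟩ := hM hx
    exact hc x y (M.adj_sub hxy) rfl
  calc matchNum G = (M.map f).edgeSet.ncard := by
        rw [Subgraph.edgeSet_map, Set.ncard_image_of_injective _ (Sym2.map.injective hf), hcard]
    _ < matchNum G' := (hM.map f hf).ncard_edgeSet_lt_matchNum hab (hmiss a ha) (hmiss b hb)

end Matching

section Contraction

variable {V : Type*} {G : SimpleGraph V}

lemma two_le_degree_of_mem_cycVerts {v : V} [Fintype (G.neighborSet v)] (hv : v ∈ cycVerts G) :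
    2 ≤ G.degree v := by
  obtain ⟨x, c, hc, hvc⟩ := hv
  calc 2 = (c.toSubgraph.neighborSet v).ncard := (hc.ncard_neighborSet_toSubgraph_eq_two hvc).symm
    _ ≤ (G.neighborSet v).ncard := Set.ncard_le_ncard (c.toSubgraph.neighborSet_subset v)
    _ = G.degree v := by
      rw [← card_neighborSet_eq_degree, Set.ncard_eq_toFinset_card', Set.toFinset_card]

lemma eq_or_mem_cycVerts_of_eqvGen {x y : V} (h : Relation.EqvGen (cycleRel G) x y) :
    x = y ∨ (x ∈ cycVerts G ∧ y ∈ cycVerts G) := by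
  induction h with
  | rel a b hab =>
    obtain ⟨c, w, hw, ha, hb⟩ := hab
    exact .inr ⟨⟨c, w, hw, ha⟩, ⟨c, w, hw, hb⟩⟩
  | refl => exact .inl rfl
  | symm _ _ _ ih => exact ih.imp Eq.symm And.symm
  | trans _ _ _ _ _ ih₁ ih₂ =>
    rcases ih₁ with rfl | ⟨ha, hb⟩
    · exact ih₂
    · rcases ih₂ with rfl | ⟨-, hc⟩
      exacts [.inr ⟨ha, hb⟩, .inr ⟨ha, hc⟩]

lemma mk_ne_mk_of_notMem_cycVerts {x y : V} (hx : x ∉ cycVerts G) (hxy : x ≠ y) :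
    Quotient.mk (contractSetoid G) x ≠ Quotient.mk (contractSetoid G) y := fun h ↦
  (eq_or_mem_cycVerts_of_eqvGen (Quotient.exact h)).elim hxy fun h ↦ hx h.1

def toTG (G : SimpleGraph V) : G.induce (cycVerts G)ᶜ →g TG G where
  toFun x := Quotient.mk (contractSetoid G) x
  map_rel' {x y} hxy :=
    ⟨mk_ne_mk_of_notMem_cycVerts x.2 (show G.Adj x y from hxy).ne, x, y, rfl, rfl, hxy⟩

lemma toTG_injective (G : SimpleGraph V) : Injective (toTG G) := fun x _ h ↦
  Subtype.ext <| not_not.mp fun hxy ↦ mk_ne_mk_of_notMem_cycVerts x.2 hxy h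

end Contraction

theorem cycle_vertex_not_quasi_pendant_general {V : Type*} [Fintype V]
    (G : SimpleGraph V) [DecidableRel G.Adj]
    (h : matchNum (TG G) = matchNum (G.induce (cycVerts G)ᶜ)) :
    ∀ u ∈ cycVerts G, ∀ w : V, G.Adj u w → G.degree w ≠ 1 := by
  intro u hu w huw hdeg
  have hw : w ∉ cycVerts G := fun hw ↦ by have := two_le_degree_of_mem_cycVerts hw; omega
  have hnbr : ∀ y, G.Adj w y → y = u := fun y hy ↦
    (degree_eq_one_iff_existsUnique_adj.mp hdeg).unique hy huw.symm
  have hwu : Quotient.mk (contractSetoid G) w ≠ Quotient.mk (contractSetoid G) u :=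
    mk_ne_mk_of_notMem_cycVerts hw huw.ne'
  refine (matchNum_lt_of_injective (toTG G) (toTG_injective G)
    (a := Quotient.mk _ w) (b := Quotient.mk _ u) ⟨hwu, w, u, rfl, rfl, huw.symm⟩ ?_ ?_).ne' h
  · intro x y hxy
    exact mk_ne_mk_of_notMem_cycVerts x.2 fun hxw ↦ y.2 (hnbr y (hxw ▸ hxy) ▸ hu)
  · intro x _ _
    exact mk_ne_mk_of_notMem_cycVerts x.2 fun hxu ↦ x.2 (hxu ▸ hu)

/-- **Lemma.** If `G` is a connected simple graph with `m(T_G) = m(G - O(G))`,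
then no vertex lying on a cycle of `G` is adjacent to a vertex of degree 1. -/
theorem cycle_vertex_not_quasi_pendant {V : Type*} [Fintype V]
    (G : SimpleGraph V) [DecidableRel G.Adj] (hG : G.Connected)
    (h : matchNum (TG G) = matchNum (G.induce (cycVerts G)ᶜ)) :
    ∀ u ∈ cycVerts G, ∀ w : V, G.Adj u w → G.degree w ≠ 1 :=
  cycle_vertex_not_quasi_pendant_general G h
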